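/- arXiv:math/0510528 — 2 statements merged into one kernel-verified Lean document; each statement's English description precedes it below -/
import Mathlib

section
/- Let n ≥ 0 and let φ : ℂ[x, y, z] → ℂ[u, v] be the ℂ-algebra homomorphism with φ(x) = u^{n+1}, φ(y) = v^{n+1}, φ(z) = uv. Then the kernel of φ is the principal ideal generated by xy − z^{n+1}. -/
open MvPolynomial Finsupp

namespace Stmt3Aux

noncomputable def phi (n : ℕ) : MvPolynomial (Fin 3) ℂ →ₐ[ℂ] MvPolynomial (Fin 2) ℂ :=
  MvPolynomial.aeval ![(MvPolynomial.X 0 : MvPolynomial (Fin 2) ℂ) ^ (n + 1),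
     MvPolynomial.X 1 ^ (n + 1), MvPolynomial.X 0 * MvPolynomial.X 1]

noncomputable def f (n : ℕ) : MvPolynomial (Fin 3) ℂ := X 0 * X 1 - X 2 ^ (n + 1)

noncomputable def g (n : ℕ) (e : Fin 3 →₀ ℕ) : Fin 2 →₀ ℕ :=
  Finsupp.single 0 ((n+1) * e 0 + e 2) + Finsupp.single 1 ((n+1) * e 1 + e 2)

lemma g_apply0 (n : ℕ) (e : Fin 3 →₀ ℕ) : g n e 0 = (n+1) * e 0 + e 2 := by
  simp [g, Finsupp.single_apply]

lemma g_apply1 (n : ℕ) (e : Fin 3 →₀ ℕ) : g n e 1 = (n+1) * e 1 + e 2 := by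
  simp [g, Finsupp.single_apply]

lemma aeval_monomial' (n : ℕ) (e : Fin 3 →₀ ℕ) (c : ℂ) :
    phi n (monomial e c) = monomial (g n e) c := by
  rw [phi, aeval_monomial, Finsupp.prod_fintype _ _ (fun i => pow_zero _),
    monomial_eq, Finsupp.prod_fintype _ _ (fun i => pow_zero _),
    Fin.prod_univ_three, Fin.prod_univ_two, g_apply0, g_apply1]
  simp only [Matrix.cons_val_zero, Matrix.cons_val_one, Matrix.head_cons,
    Matrix.cons_val_two, Matrix.tail_cons, algebraMap_eq]
  ring_nf

lemma g_inj (n : ℕ) (e e' : Fin 3 →₀ ℕ) (he : e 0 = 0 ∨ e 1 = 0)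
    (he' : e' 0 = 0 ∨ e' 1 = 0) (h : g n e = g n e') : e = e' := by
  have h0 : (n+1) * e 0 + e 2 = (n+1) * e' 0 + e' 2 := by
    rw [← g_apply0 n e, ← g_apply0 n e', h]
  have h1 : (n+1) * e 1 + e 2 = (n+1) * e' 1 + e' 2 := by
    rw [← g_apply1 n e, ← g_apply1 n e', h]
  have key : e 0 = e' 0 ∧ e 1 = e' 1 ∧ e 2 = e' 2 := by
    rcases he with hz | hz <;> rcases he' with hz' | hz'
    · rw [hz, hz', Nat.mul_zero, Nat.zero_add, Nat.zero_add] at h0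
      have hA : (n+1) * e 1 = (n+1) * e' 1 := by omega
      have := Nat.eq_of_mul_eq_mul_left (Nat.succ_pos n) hA
      exact ⟨by omega, this, h0⟩
    · rw [hz, Nat.mul_zero, Nat.zero_add] at h0
      rw [hz', Nat.mul_zero, Nat.zero_add] at h1
      have h1z : (n+1) * e 1 = 0 := by omega
      have h2z : (n+1) * e' 0 = 0 := by omega
      have e1z : e 1 = 0 := by rcases Nat.mul_eq_zero.mp h1z with h | h <;> omega
      have e0z : e' 0 = 0 := by rcases Nat.mul_eq_zero.mp h2z with h | h <;> omega
      exact ⟨by omega, by omega, by omega⟩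
    · rw [hz, Nat.mul_zero, Nat.zero_add] at h1
      rw [hz', Nat.mul_zero, Nat.zero_add] at h0
      have h1z : (n+1) * e 0 = 0 := by omega
      have h2z : (n+1) * e' 1 = 0 := by omega
      have e1z : e 0 = 0 := by rcases Nat.mul_eq_zero.mp h1z with h | h <;> omega
      have e0z : e' 1 = 0 := by rcases Nat.mul_eq_zero.mp h2z with h | h <;> omega
      exact ⟨by omega, by omega, by omega⟩
    · rw [hz, hz', Nat.mul_zero, Nat.zero_add, Nat.zero_add] at h1
      have hA : (n+1) * e 0 = (n+1) * e' 0 := by omega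
      have := Nat.eq_of_mul_eq_mul_left (Nat.succ_pos n) hA
      exact ⟨this, by omega, h1⟩
  ext i
  fin_cases i
  · exact key.1
  · exact key.2.1
  · exact key.2.2

noncomputable def mu (p : MvPolynomial (Fin 3) ℂ) : ℕ :=
  ∑ e ∈ p.support, min (e 0) (e 1)

lemma sum_insert_le' {α : Type*} [DecidableEq α] (a : α) (s : Finset α) (F : α → ℕ) :
    ∑ x ∈ insert a s, F x ≤ F a + ∑ x ∈ s, F x := by
  by_cases h : a ∈ s
  · rw [Finset.insert_eq_self.mpr h]; omega
  · rw [Finset.sum_insert h]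

lemma reduce (n : ℕ) (N : ℕ) : ∀ p : MvPolynomial (Fin 3) ℂ, mu p ≤ N →
    ∃ q r, p = q * f n + r ∧ ∀ e ∈ r.support, e 0 = 0 ∨ e 1 = 0 := by
  induction N with
  | zero =>
    intro p hp
    refine ⟨0, p, by rw [zero_mul, zero_add], fun e he => ?_⟩
    have := (Finset.sum_eq_zero_iff).mp (Nat.le_zero.mp hp) e he
    omega
  | succ N ih =>
    intro p hp
    by_cases hred : ∀ e ∈ p.support, e 0 = 0 ∨ e 1 = 0
    · exact ⟨0, p, by rw [zero_mul, zero_add], hred⟩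
    push_neg at hred
    obtain ⟨e, he, he0, he1⟩ := hred
    set c := coeff e p with hc
    set e' : Fin 3 →₀ ℕ := e - (Finsupp.single 0 1 + Finsupp.single 1 1) with he'def
    set e'' : Fin 3 →₀ ℕ := e' + Finsupp.single 2 (n+1) with he''def
    have he'0 : e' 0 = e 0 - 1 := by simp [he'def, Finsupp.tsub_apply, Finsupp.single_apply]
    have he'1 : e' 1 = e 1 - 1 := by simp [he'def, Finsupp.tsub_apply, Finsupp.single_apply]
    have he'2 : e' 2 = e 2 := by simp [he'def, Finsupp.tsub_apply, Finsupp.single_apply]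
    have he''0 : e'' 0 = e 0 - 1 := by simp [he''def, Finsupp.single_apply, he'0]
    have he''1 : e'' 1 = e 1 - 1 := by simp [he''def, Finsupp.single_apply, he'1]
    have hee : e' + (Finsupp.single 0 1 + Finsupp.single 1 1) = e := by
      ext i
      fin_cases i <;>
        simp [he'def, Finsupp.tsub_apply, Finsupp.single_apply] <;> omega
    have hne : e'' ≠ e := by
      intro h
      have := congrArg (fun x => x 0) h
      rw [he''0] at this
      omega
    have hmf : monomial e' c * f n = monomial e c - monomial e'' c := by
      rw [f, mul_sub, X_pow_eq_monomial]
      have hx01 : (X 0 * X 1 : MvPolynomial (Fin 3) ℂ)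
          = monomial (Finsupp.single 0 1 + Finsupp.single 1 1) 1 := by
        rw [X, X, monomial_mul, mul_one]
      rw [hx01, monomial_mul, monomial_mul, mul_one, hee, ← he''def]
    set p' := p - monomial e c + monomial e'' c with hp'def
    have hpp' : p = p' + monomial e' c * f n := by
      rw [hmf, hp'def]; ring
    have hsupp : p'.support ⊆ insert e'' (p.support.erase e) := by
      intro a ha
      rw [MvPolynomial.mem_support_iff] at ha
      rcases eq_or_ne a e'' with rfl | h2
      · exact Finset.mem_insert_self _ _
      rcases eq_or_ne a e with rfl | h1
      · exfalso
        apply ha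
        rw [hp'def, coeff_add, coeff_sub, coeff_monomial, coeff_monomial,
          if_pos rfl, if_neg hne]
        ring
      · refine Finset.mem_insert_of_mem (Finset.mem_erase.mpr ⟨h1, MvPolynomial.mem_support_iff.mpr ?_⟩)
        rw [hp'def, coeff_add, coeff_sub, coeff_monomial, coeff_monomial,
          if_neg (fun h => h1 h.symm), if_neg (fun h => h2 h.symm)] at ha
        simpa using ha
    have hmu : mu p' ≤ N := by
      have h1 : mu p' ≤ ∑ x ∈ insert e'' (p.support.erase e), min (x 0) (x 1) :=
        Finset.sum_le_sum_of_subset hsupp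
      have h2 : ∑ x ∈ insert e'' (p.support.erase e), min (x 0) (x 1)
          ≤ min (e'' 0) (e'' 1) + ∑ x ∈ p.support.erase e, min (x 0) (x 1) :=
        sum_insert_le' _ _ _
      have h3 : min (e 0) (e 1) + ∑ x ∈ p.support.erase e, min (x 0) (x 1) = mu p := by
        rw [mu]; exact Finset.add_sum_erase p.support (fun x => min (x 0) (x 1)) he
      rw [he''0, he''1] at h2
      omega
    obtain ⟨q, r, hqr, hr⟩ := ih p' hmu
    exact ⟨q + monomial e' c, r, by rw [hpp', hqr]; ring, hr⟩

lemma phi_f (n : ℕ) : phi n (f n) = 0 := by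
  rw [phi, f]
  simp only [map_sub, map_mul, map_pow, aeval_X, Matrix.cons_val_zero, Matrix.cons_val_one,
    Matrix.head_cons, Matrix.cons_val_two, Matrix.tail_cons]
  ring

lemma reduced_inj (n : ℕ) (r : MvPolynomial (Fin 3) ℂ)
    (hr : ∀ e ∈ r.support, e 0 = 0 ∨ e 1 = 0) (h0 : phi n r = 0) : r = 0 := by
  by_contra hne
  obtain ⟨e, he⟩ := Finset.nonempty_iff_ne_empty.mpr (fun h => hne (MvPolynomial.support_eq_empty.mp h))
  have hco : coeff (g n e) (phi n r) = coeff e r := by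
    conv_lhs => rw [r.as_sum, map_sum]
    simp_rw [aeval_monomial']
    rw [coeff_sum]
    rw [Finset.sum_eq_single_of_mem e he]
    · rw [coeff_monomial, if_pos rfl]
    · intro b hb hbe
      rw [coeff_monomial, if_neg]
      intro hgb
      exact hbe (g_inj n b e (hr b hb) (hr e he) hgb)
  rw [h0, coeff_zero] at hco
  exact MvPolynomial.mem_support_iff.mp he hco.symm

lemma ker_phi (n : ℕ) : RingHom.ker (phi n) = Ideal.span {f n} := by
  apply le_antisymm
  · intro p hp
    obtain ⟨q, r, hqr, hr⟩ := reduce n (mu p) p le_rfl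
    have hker : phi n p = 0 := hp
    have hr0 : phi n r = 0 := by
      rw [hqr, map_add, map_mul, phi_f, mul_zero, zero_add] at hker
      exact hker
    have : r = 0 := reduced_inj n r hr hr0
    rw [hqr, this, add_zero]
    exact Ideal.mem_span_singleton.mpr ⟨q, mul_comm q (f n)⟩
  · rw [Ideal.span_le]
    intro x hx
    rw [Set.mem_singleton_iff] at hx
    subst hx
    exact phi_f n

end Stmt3Aux

/-- The kernel of the `ℂ`-algebra map `ℂ[x,y,z] → ℂ[u,v]`, `x ↦ u^{n+1}`, `y ↦ v^{n+1}`,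
`z ↦ uv`, is the principal ideal generated by `xy - z^{n+1}`. -/
theorem stmt3 (n : ℕ) :
    RingHom.ker (MvPolynomial.aeval
        ![(MvPolynomial.X 0 : MvPolynomial (Fin 2) ℂ) ^ (n + 1),
          MvPolynomial.X 1 ^ (n + 1),
          MvPolynomial.X 0 * MvPolynomial.X 1] :
        MvPolynomial (Fin 3) ℂ →ₐ[ℂ] MvPolynomial (Fin 2) ℂ) =
      Ideal.span {MvPolynomial.X 0 * MvPolynomial.X 1 - MvPolynomial.X 2 ^ (n + 1)} := by
  exact Stmt3Aux.ker_phi n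
end

section
/- Let A and B be commutative ℂ-algebras, let r : A → B be a ℂ-algebra homomorphism (making B an A-module), and let p : B → A be an A-module homomorphism (i.e., p(r(a)·b) = a·p(b)). On the ℂ-vector space A ⊕ B define two products: the orbifold product (δ₁, α₁) ∘ (δ₂, α₂) = (δ₁δ₂ + (1/2)p(α₁α₂), r(δ₁)α₂ + α₁ r(δ₂)), and the quantum corrected product (δ₁, α₁) ⋆ (δ₂, α₂) = (δ₁δ₂ − 2 p(α₁α₂), r(δ₁)α₂ + α₁ r(δ₂)). Then the ℂ-linear map Φ(δ, α) = (δ, (√−1/2)·α) is a bijection satisfying Φ(x ∘ y) = Φ(x) ⋆ Φ(y) for all x, y; i.e., Φ is an isomorphism of (not necessarily associative) ℂ-algebras from (A ⊕ B, ∘) to (A ⊕ B, ⋆). -/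
/-- Ruan's conjecture for transversal `A₁` singularities, abstract form: with
`r : A → B` an algebra map and `p : B → A` satisfying the projection formula
`p(r(a)·b) = a·p(b)`, the map `Φ(δ, α) = (δ, (√-1/2)·α)` is a bijective algebra
isomorphism from the orbifold product
`(δ₁,α₁)∘(δ₂,α₂) = (δ₁δ₂ + ½ p(α₁α₂), r(δ₁)α₂ + α₁ r(δ₂))` to the quantum corrected
product `(δ₁,α₁)⋆(δ₂,α₂) = (δ₁δ₂ - 2 p(α₁α₂), r(δ₁)α₂ + α₁ r(δ₂))`. -/
theorem stmt15 (A B : Type*) [CommRing A] [CommRing B] [Algebra ℂ A] [Algebra ℂ B]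
    (r : A →ₐ[ℂ] B) (p : B →ₗ[ℂ] A)
    (hp : ∀ (a : A) (b : B), p (r a * b) = a * p b) :
    let orb : A × B → A × B → A × B := fun x y =>
      (x.1 * y.1 + (1 / 2 : ℂ) • p (x.2 * y.2), r x.1 * y.2 + x.2 * r y.1)
    let qc : A × B → A × B → A × B := fun x y =>
      (x.1 * y.1 - (2 : ℂ) • p (x.2 * y.2), r x.1 * y.2 + x.2 * r y.1)
    let Φ : A × B → A × B := fun x => (x.1, (Complex.I / 2) • x.2)
    Function.Bijective Φ ∧ ∀ x y, Φ (orb x y) = qc (Φ x) (Φ y) := by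
  intro orb qc Φ
  have hI : (Complex.I / 2) ≠ 0 := by
    simp [Complex.I_ne_zero, div_eq_zero_iff]
  constructor
  · have : Function.LeftInverse (fun x : A × B => (x.1, (Complex.I / 2)⁻¹ • x.2)) Φ ∧
        Function.RightInverse (fun x : A × B => (x.1, (Complex.I / 2)⁻¹ • x.2)) Φ := by
      constructor <;> intro x <;>
        · show ((x.1 : A), _ • _ • x.2) = x
          rw [smul_smul]
          first
          | rw [inv_mul_cancel₀ hI, one_smul]
          | rw [mul_inv_cancel₀ hI, one_smul]
    exact ⟨this.1.injective, this.2.surjective⟩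
  · intro x y
    have hc : (Complex.I / 2) * (Complex.I / 2) = -(1/4 : ℂ) := by
      rw [div_mul_div_comm, Complex.I_mul_I]; norm_num
    refine Prod.ext ?_ ?_
    · show x.1 * y.1 + (1 / 2 : ℂ) • p (x.2 * y.2)
        = x.1 * y.1 - (2 : ℂ) • p ((Complex.I / 2) • x.2 * (Complex.I / 2) • y.2)
      rw [smul_mul_assoc, mul_smul_comm, smul_smul, hc, map_smul, smul_smul]
      norm_num [sub_eq_add_neg, ← neg_smul]
    · show (Complex.I / 2) • (r x.1 * y.2 + x.2 * r y.1)
        = r x.1 * (Complex.I / 2) • y.2 + (Complex.I / 2) • x.2 * r y.1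
      rw [smul_add, mul_smul_comm, smul_mul_assoc]
end
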